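/- Let G be the 2-edge-coloured graph consisting of the graph K_4^{s+} on vertices x_1, ..., x_5 (as in the paper), together with an extra vertex v and an edge vx_1 of arbitrary sign. Then for every vertex i of SP_9 there exists a 2-edge-coloured homomorphism φ : G → SP_9^† with φ(v) = i and φ(x_5) = z, where SP_9^† is SP_9 together with a new vertex z joined by positive edges to vertices 0, 1, 2 and by negative edges to vertices 6, 7, 8. -/
import Mathlib


/-- Vertices of `SP_9`, identified with `{0,1,2} × {0,1,2}` via
`i ↦ (i div 3, i mod 3)` (so `0,1,2` are the vertices with first coordinate
`0`, and `6,7,8` are those with first coordinate `2`). -/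
abbrev V9 : Type := Fin 3 × Fin 3

/-- The edge `uv` of `SP_9` is positive: `u ≠ v` and they agree in exactly one coordinate. -/
abbrev pos9 (u v : V9) : Prop :=
  (u.1 = v.1 ∧ u.2 ≠ v.2) ∨ (u.1 ≠ v.1 ∧ u.2 = v.2)

/-- The edge `uv` of `SP_9` is negative: `u ≠ v` and it is not positive. -/
abbrev neg9 (u v : V9) : Prop := u ≠ v ∧ ¬ pos9 u v

/-- Vertices of `SP_9†`: the vertices of `SP_9` together with the extra vertex
`z`, encoded as `none`. -/
abbrev V9d : Type := Option V9

/-- Positive edges of `SP_9†`: those of `SP_9`, together with the edges from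
`z` to the vertices `0, 1, 2` (first coordinate `0`). -/
def posD : V9d → V9d → Prop
  | some u, some v => pos9 u v
  | some u, none => u.1 = 0
  | none, some v => v.1 = 0
  | none, none => False

/-- Negative edges of `SP_9†`: those of `SP_9`, together with the edges from
`z` to the vertices `6, 7, 8` (first coordinate `2`). -/
def negD : V9d → V9d → Prop
  | some u, some v => neg9 u v
  | some u, none => u.1 = 2
  | none, some v => v.1 = 2
  | none, none => False

/-- `a` and `c` are joined in `SP_9†` by an edge of sign `b` (`true` = positive). -/
def edgeD (b : Bool) (a c : V9d) : Prop := if b then posD a c else negD a c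


instance (a c : V9d) : Decidable (posD a c) :=
  match a, c with
  | some u, some v => inferInstanceAs (Decidable (pos9 u v))
  | some u, none => inferInstanceAs (Decidable (u.1 = 0))
  | none, some v => inferInstanceAs (Decidable (v.1 = 0))
  | none, none => inferInstanceAs (Decidable False)

instance (a c : V9d) : Decidable (negD a c) :=
  match a, c with
  | some u, some v => inferInstanceAs (Decidable (neg9 u v))
  | some u, none => inferInstanceAs (Decidable (u.1 = 2))
  | none, some v => inferInstanceAs (Decidable (v.1 = 2))
  | none, none => inferInstanceAs (Decidable False)

instance (b : Bool) (a c : V9d) : Decidable (edgeD b a c) := by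
  unfold edgeD; split <;> infer_instance

/-- Lemma 3 (extension through `K₄^{s+}`): let `G` consist of a copy of
`K₄^{s+}` — vertices `x₁,…,x₅` (here indices `1,…,5` of `Fin 6`) with the
all-positive `K₄` on `x₂,x₃,x₄,x₅` having the edge `x₂x₃` replaced by the path
`x₂ x₁ x₃` with `x₁x₂` positive and `x₁x₃` negative — together with an
appended vertex `v` (index `0`) and an edge `v x₁` of arbitrary sign `b`.
Then for every vertex `i` of `SP_9` there is a sign-preserving homomorphism
`φ : G → SP_9†` with `φ v = i` and `φ x₅ = z`. -/
theorem extend_through_K4sPlus :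
    ∀ (b : Bool) (i : V9), ∃ φ : Fin 6 → V9d,
      φ 0 = some i ∧ φ 5 = none ∧
      edgeD b (φ 0) (φ 1) ∧
      edgeD true (φ 1) (φ 2) ∧ edgeD false (φ 1) (φ 3) ∧
      edgeD true (φ 2) (φ 4) ∧ edgeD true (φ 2) (φ 5) ∧
      edgeD true (φ 3) (φ 4) ∧ edgeD true (φ 3) (φ 5) ∧
      edgeD true (φ 4) (φ 5) := by
  intro b i
  obtain ⟨r, c⟩ := i
  let a1 : V9 := if b then (if r = 0 then (1, c) else (r, c + 1))
    else (if r = 1 then 2 else 1, c + 1)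
  refine ⟨![some (r, c), some a1, some (0, a1.2), some (0, a1.2 + 1),
      some (0, a1.2 + 2), none], rfl, rfl, ?_, ?_, ?_, ?_, ?_, ?_, ?_, ?_⟩ <;>
    fin_cases b <;> fin_cases r <;> fin_cases c <;> decide
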